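/- arXiv:1006.4937 — 2 statements merged into one kernel-verified Lean document; each statement's English description precedes it below -/
import Mathlib

section
/- For every round m, if O_m ≠ ∅ then O_{m+1} ∪ H_{m+1} is a strict subset of O_m ∪ H_m: the set of links that are OPEN or CHECK strictly decreases in every round in which some link is OPEN. -/
open Classical

/-- Link distance `d(l_u,l_v)`: minimum graph distance between endpoints of the two links. -/
noncomputable def linkDist {V : Type*} (G : SimpleGraph V) (lu lv : V × V) : ℕ :=
  min (min (G.dist lu.1 lv.1) (G.dist lu.1 lv.2))
      (min (G.dist lu.2 lv.1) (G.dist lu.2 lv.2))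

/-- A wireless network: a connected simple graph `G` on the node set `V`, a finite set `L`
of directed links between adjacent nodes, an interference parameter `K ≥ 1`, and
pairwise distinct link prices `lam`. -/
structure Net (V : Type*) where
  G : SimpleGraph V
  conn : G.Connected
  L : Set (V × V)
  Lfin : L.Finite
  adj : ∀ l ∈ L, G.Adj l.1 l.2
  K : ℕ
  hK : 1 ≤ K
  lam : V × V → ℝ
  distinct : ∀ l ∈ L, ∀ l' ∈ L, l ≠ l' → lam l ≠ lam l'

/-- `W` is a `K`-valid matching: distinct links of `W` are at link distance `≥ K`. -/
def KValid {V : Type*} (N : Net V) (W : Set (V × V)) : Prop :=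
  ∀ l ∈ W, ∀ l' ∈ W, l ≠ l' → N.K ≤ linkDist N.G l l'

/-- State of the distributed algorithm: the OPEN, CHECK, MARKED and CLOSED links. -/
structure St (V : Type*) where
  O : Set (V × V)
  H : Set (V × V)
  M : Set (V × V)
  C : Set (V × V)

/-- The OPEN attached links of node `n` (OPEN links whose source is `n`). -/
def openAt {V : Type*} (s : St V) (n : V) : Set (V × V) :=
  {l ∈ s.O | l.1 = n}

/-- `a` selects, at every node `n` having an OPEN attached link, the highest-priced
OPEN attached link `a n` of `n`. -/
def IsSelector {V : Type*} (N : Net V) (s : St V) (a : V → V × V) : Prop :=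
  ∀ n, (openAt s n).Nonempty →
    a n ∈ openAt s n ∧ ∀ l ∈ openAt s n, N.lam l ≤ N.lam (a n)

/-- `R(n)`: the highest-priced OPEN attached links `a n'` of the other nodes `n'` within
`K+1` hops of `n` that have an OPEN attached link. -/
def Rset {V : Type*} (N : Net V) (s : St V) (a : V → V × V) (n : V) : Set (V × V) :=
  {l' | ∃ n', n' ≠ n ∧ N.G.dist n n' ≤ N.K + 1 ∧ (openAt s n').Nonempty ∧ l' = a n'}

/-- Node `n` marks its highest-priced OPEN attached link `a n`: `n` has an OPEN attached
link, and either `R(n) = ∅` or `a n` beats every received price (this disjunction is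
expressed by the universally quantified inequality). -/
def MarkCond {V : Type*} (N : Net V) (s : St V) (a : V → V × V) (n : V) : Prop :=
  (openAt s n).Nonempty ∧ ∀ l' ∈ Rset N s a n, N.lam l' < N.lam (a n)

/-- One round of the distributed greedy algorithm, transforming state `s` into `s'`.
Phase 1: each node `n` with an OPEN attached link either marks `a n` and closes its other
OPEN attached links (when `MarkCond` holds), or moves to CHECK each OPEN attached link
that is interfered with by a strictly higher-priced received link, the rest staying OPEN.
Phase 2: the marked links are added to the MARKED set; every CHECK link interfering with
some MARKED link is closed; then at each node the highest-priced attached link still in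
CHECK (if any) becomes OPEN again. -/
def Step {V : Type*} (N : Net V) (s s' : St V) : Prop :=
  ∃ a : V → V × V, IsSelector N s a ∧
    (let newMarked : Set (V × V) := {l | ∃ n, MarkCond N s a n ∧ l = a n}
     let closed1 : Set (V × V) := {l ∈ s.O | MarkCond N s a l.1 ∧ l ≠ a l.1}
     let newCheck : Set (V × V) :=
       {l ∈ s.O | ¬ MarkCond N s a l.1 ∧
         ∃ l' ∈ Rset N s a l.1, N.lam l < N.lam l' ∧ linkDist N.G l l' < N.K}
     let M' : Set (V × V) := s.M ∪ newMarked
     let pool : Set (V × V) := s.H ∪ newCheck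
     let closed2 : Set (V × V) := {l ∈ pool | ∃ j ∈ M', linkDist N.G l j < N.K}
     let rem : Set (V × V) := pool \ closed2
     let reopened : Set (V × V) := {l ∈ rem | ∀ l' ∈ rem, l'.1 = l.1 → N.lam l' ≤ N.lam l}
     s'.O = (s.O \ (newMarked ∪ closed1 ∪ newCheck)) ∪ reopened ∧
     s'.H = rem \ reopened ∧
     s'.M = M' ∧
     s'.C = s.C ∪ closed1 ∪ closed2)

/-- A trajectory of the distributed greedy algorithm, rounds indexed from `1`:
initially every link of `L` is OPEN, and each round `m ≥ 1` performs one `Step`. -/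
def IsTrajectory {V : Type*} (N : Net V) (O H M C : ℕ → Set (V × V)) : Prop :=
  O 1 = N.L ∧ H 1 = ∅ ∧ M 1 = ∅ ∧ C 1 = ∅ ∧
    ∀ m, 1 ≤ m → Step N ⟨O m, H m, M m, C m⟩ ⟨O (m+1), H (m+1), M (m+1), C (m+1)⟩

/-- Process a list of links in order, starting from `W`, adding a link whenever the
result is still a `K`-valid matching.  Applied to the listing of `L` in strictly
decreasing order of price, this computes the centralized greedy schedule `L_C`. -/
noncomputable def greedyList {V : Type*} (N : Net V) :
    List (V × V) → Set (V × V) → Set (V × V)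
  | [], W => W
  | l :: ls, W => greedyList N ls (if KValid N (insert l W) then insert l W else W)

/-!
In a round with some OPEN link, the most expensive OPEN link `l` (over the whole network) beats
every price its source receives, so its source marks it. A marked link interferes with itself
(`linkDist l l = 0 < K`), so `l` is also closed if it sits in the CHECK pool; hence it leaves
OPEN ∪ CHECK. Finiteness and distinctness of prices apply because OPEN ∪ CHECK stays inside `L`.
-/

lemma linkDist_self {V : Type*} (G : SimpleGraph V) (l : V × V) : linkDist G l l = 0 := by
  simp [linkDist]

lemma Net.eq_of_lam_eq {V : Type*} (N : Net V) {l l' : V × V} (hl : l ∈ N.L) (hl' : l' ∈ N.L)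
    (h : N.lam l = N.lam l') : l = l' :=
  not_imp_not.mp (N.distinct l hl l' hl') h

section Round

variable {V : Type*} {N : Net V} {s s' : St V} {a : V → V × V} {l : V × V}

lemma IsSelector.apply_eq_of_isMax (hsel : IsSelector N s a) (hL : s.O ⊆ N.L) (hl : l ∈ s.O)
    (hmax : ∀ l' ∈ s.O, N.lam l' ≤ N.lam l) : a l.1 = l := by
  obtain ⟨⟨haO, -⟩, hale⟩ := hsel l.1 ⟨l, hl, rfl⟩
  exact N.eq_of_lam_eq (hL haO) (hL hl) (le_antisymm (hmax _ haO) (hale l ⟨hl, rfl⟩))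

lemma IsSelector.markCond_of_isMax (hsel : IsSelector N s a) (hL : s.O ⊆ N.L) (hl : l ∈ s.O)
    (hmax : ∀ l' ∈ s.O, N.lam l' ≤ N.lam l) : MarkCond N s a l.1 := by
  refine ⟨⟨l, hl, rfl⟩, ?_⟩
  rintro _ ⟨n', hn', -, hopen, rfl⟩
  obtain ⟨⟨haO, hsrc⟩, -⟩ := hsel n' hopen
  have hne : a n' ≠ l := fun h => hn' (hsrc.symm.trans (congrArg Prod.fst h))
  rw [hsel.apply_eq_of_isMax hL hl hmax]
  exact (hmax _ haO).lt_of_ne (mt (N.eq_of_lam_eq (hL haO) (hL hl)) hne)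

lemma Step.exists_selector_of_mem_openCheck (h : Step N s s') :
    ∃ a, IsSelector N s a ∧
      ∀ x ∈ s'.O ∪ s'.H, x ∈ s.O ∪ s.H ∧ ∀ n, MarkCond N s a n → x ≠ a n := by
  obtain ⟨a, hsel, hO, hH, -, -⟩ := h
  refine ⟨a, hsel, ?_⟩
  rw [hO, hH]
  rintro x ((⟨hxO, hnot⟩ | ⟨⟨hpool, hnc⟩, -⟩) | ⟨⟨hpool, hnc⟩, -⟩)
  · exact ⟨Or.inl hxO, fun n hn hx => hnot (Or.inl (Or.inl ⟨n, hn, hx⟩))⟩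
  -- a link marked this round interferes with itself, so it cannot survive in the CHECK pool
  all_goals
    refine ⟨hpool.elim Or.inr fun hx => Or.inl hx.1,
      fun n hn hx => hnc ⟨hpool, a n, Or.inr ⟨n, hn, rfl⟩, ?_⟩⟩
    rw [hx, linkDist_self]
    exact N.hK

lemma Step.openCheck_subset (h : Step N s s') : s'.O ∪ s'.H ⊆ s.O ∪ s.H := by
  obtain ⟨_, -, hsurv⟩ := h.exists_selector_of_mem_openCheck
  exact fun x hx => (hsurv x hx).1

lemma Step.not_mem_openCheck_of_isMax (h : Step N s s') (hL : s.O ⊆ N.L) (hl : l ∈ s.O)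
    (hmax : ∀ l' ∈ s.O, N.lam l' ≤ N.lam l) : l ∉ s'.O ∪ s'.H := fun hl' => by
  obtain ⟨a, hsel, hsurv⟩ := h.exists_selector_of_mem_openCheck
  exact (hsurv l hl').2 l.1 (hsel.markCond_of_isMax hL hl hmax)
    (hsel.apply_eq_of_isMax hL hl hmax).symm

end Round

lemma IsTrajectory.openCheck_subset_links {V : Type*} {N : Net V} {O H M C : ℕ → Set (V × V)}
    (htraj : IsTrajectory N O H M C) {m : ℕ} (hm : 1 ≤ m) : O m ∪ H m ⊆ N.L := by
  obtain ⟨hO1, hH1, -, -, hstep⟩ := htraj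
  induction m, hm using Nat.le_induction with
  | base => simp [hO1, hH1]
  | succ m hm ih => exact (hstep m hm).openCheck_subset.trans ih

theorem stmt4_open_check_strictly_decreases_general {V : Type*} (N : Net V)
    (O H M C : ℕ → Set (V × V)) (htraj : IsTrajectory N O H M C) :
    ∀ m, 1 ≤ m → (O m).Nonempty → O (m + 1) ∪ H (m + 1) ⊂ O m ∪ H m := by
  intro m hm hne
  have hL : O m ⊆ N.L := Set.subset_union_left.trans (htraj.openCheck_subset_links hm)
  obtain ⟨l, hl, hmax⟩ := Set.exists_max_image (O m) N.lam (N.Lfin.subset hL) hne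
  have hstep := htraj.2.2.2.2 m hm
  exact (Set.ssubset_iff_of_subset hstep.openCheck_subset).mpr
    ⟨l, Or.inl hl, hstep.not_mem_openCheck_of_isMax hL hl hmax⟩

/-- the set of OPEN-or-CHECK links strictly decreases in every round in
which some link is OPEN: if `O m ≠ ∅` then `O (m+1) ∪ H (m+1) ⊂ O m ∪ H m`. -/
theorem stmt4_open_check_strictly_decreases {V : Type*} [Fintype V] (N : Net V)
    (O H M C : ℕ → Set (V × V)) (htraj : IsTrajectory N O H M C) :
    ∀ m, 1 ≤ m → (O m).Nonempty → O (m + 1) ∪ H (m + 1) ⊂ O m ∪ H m :=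
  stmt4_open_check_strictly_decreases_general N O H M C htraj
end

section
/- If the distributed greedy algorithm terminates after round t (i.e., O_{t+1} ∪ H_{t+1} = ∅), then L_C ⊆ M_{t+1}: every link chosen by the centralized greedy algorithm is MARKED by the distributed greedy algorithm by the time it terminates. -/
open Classical

/-!
Along a run of the distributed algorithm the MARKED links stay a `K`-valid matching, OPEN and
CHECK links stay out of interference range of MARKED ones, every CLOSED link interferes with a
higher-priced MARKED link, and every CHECK link is outbid by an OPEN link at its own source.
The last fact is what makes marking safe: a link interfering with `a n` has its source within
`K + 1` hops of `n`, so it is outbid by a link of `R(n)` and hence by `a n` itself.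
At termination `L = M ∪ C`, and a `K`-valid set that dominates its complement in this way
contains everything the price-ordered greedy algorithm picks.
-/

section

variable {V : Type*}

lemma linkDist_comm (G : SimpleGraph V) (l l' : V × V) : linkDist G l l' = linkDist G l' l := by
  unfold linkDist
  rw [G.dist_comm (u := l.1) (v := l'.1), G.dist_comm (u := l.1) (v := l'.2),
    G.dist_comm (u := l.2) (v := l'.1), G.dist_comm (u := l.2) (v := l'.2)]
  omega

lemma linkDist_le_dist_fst (G : SimpleGraph V) (l l' : V × V) :
    linkDist G l l' ≤ G.dist l.1 l'.1 := by
  unfold linkDist; omega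

lemma Net.linkDist_lt_of_fst_eq (N : Net V) {l l' : V × V} (h : l.1 = l'.1) :
    linkDist N.G l l' < N.K := by
  have := linkDist_le_dist_fst N.G l l'
  rw [h, SimpleGraph.dist_self] at this
  have := N.hK
  omega

lemma Net.dist_fst_le_of_linkDist_lt (N : Net V) {l l' : V × V} (hl : N.G.Adj l.1 l.2)
    (hl' : N.G.Adj l'.1 l'.2) (h : linkDist N.G l l' < N.K) : N.G.dist l.1 l'.1 ≤ N.K + 1 := by
  have e1 : N.G.dist l.1 l.2 = 1 := SimpleGraph.dist_eq_one_iff_adj.2 hl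
  have e2 : N.G.dist l'.2 l'.1 = 1 := SimpleGraph.dist_eq_one_iff_adj.2 hl'.symm
  have t1 : N.G.dist l.1 l'.1 ≤ N.G.dist l.1 l'.2 + N.G.dist l'.2 l'.1 := N.conn.dist_triangle
  have t2 : N.G.dist l.1 l'.1 ≤ N.G.dist l.1 l.2 + N.G.dist l.2 l'.1 := N.conn.dist_triangle
  have t3 : N.G.dist l.2 l'.1 ≤ N.G.dist l.2 l'.2 + N.G.dist l'.2 l'.1 := N.conn.dist_triangle
  unfold linkDist at h
  omega

lemma KValid.mono {N : Net V} {W W' : Set (V × V)} (h' : KValid N W') (h : W ⊆ W') :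
    KValid N W :=
  fun l hl l' hl' hne => h' l (h hl) l' (h hl') hne

section Selector

variable {N : Net V} {s : St V} {a : V → V × V} {n : V}

lemma IsSelector.mem (hsel : IsSelector N s a) (hn : (openAt s n).Nonempty) : a n ∈ s.O :=
  (hsel n hn).1.1

lemma IsSelector.fst_eq (hsel : IsSelector N s a) (hn : (openAt s n).Nonempty) : (a n).1 = n :=
  (hsel n hn).1.2

lemma IsSelector.lam_le (hsel : IsSelector N s a) {l : V × V} (hl : l ∈ s.O) :
    N.lam l ≤ N.lam (a l.1) :=
  (hsel l.1 ⟨l, hl, rfl⟩).2 l ⟨hl, rfl⟩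

end Selector

namespace Step

variable (N : Net V) (s : St V) (a : V → V × V)

def newMarked : Set (V × V) := {l | ∃ n, MarkCond N s a n ∧ l = a n}

def closed1 : Set (V × V) := {l ∈ s.O | MarkCond N s a l.1 ∧ l ≠ a l.1}

def newCheck : Set (V × V) :=
  {l ∈ s.O | ¬ MarkCond N s a l.1 ∧
    ∃ l' ∈ Rset N s a l.1, N.lam l < N.lam l' ∧ linkDist N.G l l' < N.K}

def pool : Set (V × V) := s.H ∪ newCheck N s a

def closed2 : Set (V × V) :=
  {l ∈ pool N s a | ∃ j ∈ s.M ∪ newMarked N s a, linkDist N.G l j < N.K}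

def rem : Set (V × V) := pool N s a \ closed2 N s a

def reopened : Set (V × V) :=
  {l ∈ rem N s a | ∀ l' ∈ rem N s a, l'.1 = l.1 → N.lam l' ≤ N.lam l}

def next : St V where
  O := (s.O \ (newMarked N s a ∪ closed1 N s a ∪ newCheck N s a)) ∪ reopened N s a
  H := rem N s a \ reopened N s a
  M := s.M ∪ newMarked N s a
  C := s.C ∪ closed1 N s a ∪ closed2 N s a

variable {N s a}

lemma iff_exists_next {s' : St V} :
    Step N s s' ↔ ∃ a, IsSelector N s a ∧ s' = next N s a := by
  refine exists_congr fun a => and_congr_right fun _ => ?_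
  obtain ⟨O, H, M, C⟩ := s'
  simp only [next, St.mk.injEq]
  rfl

lemma pool_subset : pool N s a ⊆ s.O ∪ s.H :=
  fun _ h => h.elim Or.inr fun h' => Or.inl h'.1

lemma newMarked_subset (hsel : IsSelector N s a) : newMarked N s a ⊆ s.O := by
  rintro _ ⟨n, hm, rfl⟩
  exact hsel.mem hm.1

lemma mem_next_of_mem_pool {l : V × V} (hp : l ∈ pool N s a) :
    l ∈ (next N s a).O ∪ (next N s a).H ∪ (next N s a).M ∪ (next N s a).C := by
  by_cases h2 : l ∈ closed2 N s a
  · exact Or.inr (Or.inr h2)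
  by_cases h3 : l ∈ reopened N s a
  · exact Or.inl (Or.inl (Or.inl (Or.inr h3)))
  · exact Or.inl (Or.inl (Or.inr ⟨⟨hp, h2⟩, h3⟩))

lemma far_of_mem_rem {l j : V × V} (hl : l ∈ rem N s a) (hj : j ∈ s.M ∪ newMarked N s a) :
    N.K ≤ linkDist N.G l j :=
  not_lt.1 fun hd => hl.2 ⟨hl.1, j, hj, hd⟩

lemma exists_reopened_ge (hfin : (rem N s a).Finite) {l : V × V} (hl : l ∈ rem N s a) :
    ∃ r ∈ reopened N s a, r.1 = l.1 ∧ N.lam l ≤ N.lam r := by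
  obtain ⟨r, ⟨hr, hr1⟩, hmax⟩ :=
    Set.exists_max_image {x ∈ rem N s a | x.1 = l.1} N.lam (hfin.subset fun _ h => h.1) ⟨l, hl, rfl⟩
  exact ⟨r, ⟨hr, fun l' hl' h1 => hmax l' ⟨hl', h1.trans hr1⟩⟩, hr1, hmax l ⟨hl, rfl⟩⟩

end Step

open Step

structure StInvariant (N : Net V) (s : St V) : Prop where
  O_subset : s.O ⊆ N.L
  H_subset : s.H ⊆ N.L
  M_subset : s.M ⊆ N.L
  subset_union : N.L ⊆ s.O ∪ s.H ∪ s.M ∪ s.C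
  not_mem_H : ∀ l ∈ s.O, l ∉ s.H
  far_from_M : ∀ l ∈ s.O ∪ s.H, ∀ j ∈ s.M, N.K ≤ linkDist N.G l j
  M_valid : KValid N s.M
  C_dominated : ∀ l ∈ s.C, ∃ j ∈ s.M, N.lam l < N.lam j ∧ linkDist N.G l j < N.K
  H_dominated : ∀ l ∈ s.H, ∃ l' ∈ s.O, l'.1 = l.1 ∧ N.lam l < N.lam l'

namespace StInvariant

variable {N : Net V} {s : St V} {a : V → V × V}

lemma init (N : Net V) : StInvariant N ⟨N.L, ∅, ∅, ∅⟩ where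
  O_subset := subset_rfl
  H_subset := Set.empty_subset _
  M_subset := Set.empty_subset _
  subset_union := fun _ hl => Or.inl (Or.inl (Or.inl hl))
  not_mem_H := fun _ _ h => h
  far_from_M := fun _ _ _ h => h.elim
  M_valid := fun _ h => h.elim
  C_dominated := fun _ h => h.elim
  H_dominated := fun _ h => h.elim

lemma mem_L_of_mem_pool (hI : StInvariant N s) {l : V × V} (hl : l ∈ pool N s a) : l ∈ N.L :=
  (pool_subset hl).elim (fun h => hI.O_subset h) fun h => hI.H_subset h

lemma lam_lt_marked (hI : StInvariant N s) (hsel : IsSelector N s a) {n : V}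
    (hm : MarkCond N s a n) {l : V × V} (hl : l ∈ s.O ∪ s.H) (hd : linkDist N.G l (a n) < N.K)
    (hne : l ≠ a n) : N.lam l < N.lam (a n) := by
  have haL : a n ∈ N.L := hI.O_subset (hsel.mem hm.1)
  have hlL : l ∈ N.L := hl.elim (fun h => hI.O_subset h) fun h => hI.H_subset h
  obtain ⟨lw, hlwO, hlw1, hlw⟩ : ∃ lw ∈ s.O, lw.1 = l.1 ∧ N.lam l ≤ N.lam lw := by
    rcases hl with h | h
    · exact ⟨l, h, rfl, le_rfl⟩
    · obtain ⟨l', hl'O, hl'1, hlt⟩ := hI.H_dominated l h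
      exact ⟨l', hl'O, hl'1, hlt.le⟩
  have hla : N.lam l ≤ N.lam (a l.1) := hlw.trans (hlw1 ▸ hsel.lam_le hlwO)
  by_cases hsrc : l.1 = n
  · exact lt_of_le_of_ne (hsrc ▸ hla) (N.distinct l hlL (a n) haL hne)
  have hdist : N.G.dist n l.1 ≤ N.K + 1 := by
    have := N.dist_fst_le_of_linkDist_lt (N.adj l hlL) (N.adj _ haL) hd
    rwa [hsel.fst_eq hm.1, N.G.dist_comm] at this
  exact hla.trans_lt (hm.2 _ ⟨l.1, hsrc, hdist, ⟨lw, hlwO, hlw1⟩, rfl⟩)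

lemma mem_phase1_of_linkDist_lt_marked (hI : StInvariant N s) (hsel : IsSelector N s a)
    {n : V} (hm : MarkCond N s a n) {l : V × V} (hl : l ∈ s.O)
    (hd : linkDist N.G l (a n) < N.K) : l ∈ newMarked N s a ∪ closed1 N s a ∪ newCheck N s a := by
  have ha1 := hsel.fst_eq hm.1
  by_cases hsrc : l.1 = n
  · by_cases hla : l = a n
    · exact Or.inl (Or.inl ⟨n, hm, hla⟩)
    · exact Or.inl (Or.inr ⟨hl, hsrc ▸ hm, hsrc ▸ hla⟩)
  have hdist : N.G.dist l.1 n ≤ N.K + 1 := by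
    have := N.dist_fst_le_of_linkDist_lt (N.adj l (hI.O_subset hl))
      (N.adj _ (hI.O_subset (hsel.mem hm.1))) hd
    rwa [ha1] at this
  have hR : a n ∈ Rset N s a l.1 := ⟨n, Ne.symm hsrc, hdist, hm.1, rfl⟩
  have hnm : ¬ MarkCond N s a l.1 := fun hm' =>
    lt_asymm (hm.2 _ ⟨l.1, hsrc, N.G.dist_comm ▸ hdist, ⟨l, hl, rfl⟩, rfl⟩) (hm'.2 _ hR)
  have hne : l ≠ a n := fun h => hsrc (h ▸ ha1)
  exact Or.inr ⟨hl, hnm, a n, hR, hI.lam_lt_marked hsel hm (Or.inl hl) hd hne, hd⟩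

lemma lam_lt_marked_of_mem_pool (hI : StInvariant N s) (hsel : IsSelector N s a) {n : V}
    (hm : MarkCond N s a n) {l : V × V} (hl : l ∈ pool N s a)
    (hd : linkDist N.G l (a n) < N.K) : N.lam l < N.lam (a n) := by
  refine hI.lam_lt_marked hsel hm (pool_subset hl) hd ?_
  rintro rfl
  rcases hl with h | h
  · exact hI.not_mem_H _ (hsel.mem hm.1) h
  · exact h.2.1 ((hsel.fst_eq hm.1).symm ▸ hm)

lemma linkDist_marked_ge (hI : StInvariant N s) (hsel : IsSelector N s a) {n n' : V}
    (hm : MarkCond N s a n) (hm' : MarkCond N s a n') (hne : a n ≠ a n') :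
    N.K ≤ linkDist N.G (a n) (a n') := by
  by_contra! hd
  have hnn : n ≠ n' := fun h => hne (h ▸ rfl)
  have hdist : N.G.dist n n' ≤ N.K + 1 := by
    have := N.dist_fst_le_of_linkDist_lt (N.adj _ (hI.O_subset (hsel.mem hm.1)))
      (N.adj _ (hI.O_subset (hsel.mem hm'.1))) hd
    rwa [hsel.fst_eq hm.1, hsel.fst_eq hm'.1] at this
  exact lt_asymm (hm.2 _ ⟨n', hnn.symm, hdist, hm'.1, rfl⟩)
    (hm'.2 _ ⟨n, hnn, N.G.dist_comm ▸ hdist, hm.1, rfl⟩)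

lemma next_subset_union (hI : StInvariant N s) :
    N.L ⊆ (next N s a).O ∪ (next N s a).H ∪ (next N s a).M ∪ (next N s a).C := by
  intro l hl
  rcases hI.subset_union hl with ((hO | hH) | hM) | hC
  · by_cases hx : l ∈ newMarked N s a ∪ closed1 N s a ∪ newCheck N s a
    · rcases hx with (hx | hx) | hx
      · exact Or.inl (Or.inr (Or.inr hx))
      · exact Or.inr (Or.inl (Or.inr hx))
      · exact mem_next_of_mem_pool (Or.inr hx)
    · exact Or.inl (Or.inl (Or.inl (Or.inl ⟨hO, hx⟩)))
  · exact mem_next_of_mem_pool (Or.inl hH)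
  · exact Or.inl (Or.inr (Or.inl hM))
  · exact Or.inr (Or.inl (Or.inl hC))

lemma next_not_mem_H (hI : StInvariant N s) :
    ∀ l ∈ (next N s a).O, l ∉ (next N s a).H := by
  rintro l (⟨hO, hx⟩ | hr) ⟨hrem, hnr⟩
  · rcases hrem.1 with hH | hc
    · exact hI.not_mem_H l hO hH
    · exact hx (Or.inr hc)
  · exact hnr hr

lemma next_far_from_M (hI : StInvariant N s) (hsel : IsSelector N s a) :
    ∀ l ∈ (next N s a).O ∪ (next N s a).H, ∀ j ∈ (next N s a).M, N.K ≤ linkDist N.G l j := by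
  rintro l ((⟨hO, hx⟩ | hr) | hH) j hj
  · rcases hj with hj | ⟨n, hm, rfl⟩
    · exact hI.far_from_M l (Or.inl hO) j hj
    · exact not_lt.1 fun hd => hx (hI.mem_phase1_of_linkDist_lt_marked hsel hm hO hd)
  · exact far_of_mem_rem hr.1 hj
  · exact far_of_mem_rem hH.1 hj

lemma next_M_valid (hI : StInvariant N s) (hsel : IsSelector N s a) :
    KValid N (next N s a).M := by
  rintro l (hl | ⟨n, hm, rfl⟩) l' (hl' | ⟨n', hm', rfl⟩) hne
  · exact hI.M_valid l hl l' hl' hne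
  · rw [linkDist_comm]
    exact hI.far_from_M _ (Or.inl (hsel.mem hm'.1)) l hl
  · exact hI.far_from_M _ (Or.inl (hsel.mem hm.1)) l' hl'
  · exact hI.linkDist_marked_ge hsel hm hm' hne

lemma next_C_dominated (hI : StInvariant N s) (hsel : IsSelector N s a) :
    ∀ l ∈ (next N s a).C,
      ∃ j ∈ (next N s a).M, N.lam l < N.lam j ∧ linkDist N.G l j < N.K := by
  rintro l ((hC | ⟨hO, hm, hne⟩) | ⟨hp, j, hj, hd⟩)
  · obtain ⟨j, hj, hlt, hd⟩ := hI.C_dominated l hC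
    exact ⟨j, Or.inl hj, hlt, hd⟩
  · have haO := hsel.mem hm.1
    have hlt : N.lam l < N.lam (a l.1) := lt_of_le_of_ne (hsel.lam_le hO)
      (N.distinct l (hI.O_subset hO) _ (hI.O_subset haO) hne)
    exact ⟨a l.1, Or.inr ⟨l.1, hm, rfl⟩, hlt, N.linkDist_lt_of_fst_eq (hsel.fst_eq hm.1).symm⟩
  · rcases hj with hj | ⟨n, hm, rfl⟩
    · exact absurd hd (not_lt.2 (hI.far_from_M l (pool_subset hp) j hj))
    · exact ⟨a n, Or.inr ⟨n, hm, rfl⟩, hI.lam_lt_marked_of_mem_pool hsel hm hp hd, hd⟩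

lemma next_H_dominated (hI : StInvariant N s) :
    ∀ l ∈ (next N s a).H, ∃ l' ∈ (next N s a).O, l'.1 = l.1 ∧ N.lam l < N.lam l' := by
  rintro l ⟨hrem, hnr⟩
  obtain ⟨l₀, hl₀, hl₀1, hlt⟩ : ∃ l₀ ∈ rem N s a, l₀.1 = l.1 ∧ N.lam l < N.lam l₀ := by
    by_contra! h
    exact hnr ⟨hrem, h⟩
  have hfin : (rem N s a).Finite := N.Lfin.subset fun _ h => hI.mem_L_of_mem_pool h.1
  obtain ⟨r, hr, hr1, hle⟩ := exists_reopened_ge hfin hl₀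
  exact ⟨r, Or.inr hr, hr1.trans hl₀1, hlt.trans_le hle⟩

lemma next (hI : StInvariant N s) (hsel : IsSelector N s a) : StInvariant N (next N s a) where
  O_subset := by
    rintro l (⟨hO, _⟩ | hr)
    exacts [hI.O_subset hO, hI.mem_L_of_mem_pool hr.1.1]
  H_subset := fun _ h => hI.mem_L_of_mem_pool h.1.1
  M_subset := Set.union_subset hI.M_subset ((newMarked_subset hsel).trans hI.O_subset)
  subset_union := hI.next_subset_union
  not_mem_H := hI.next_not_mem_H
  far_from_M := hI.next_far_from_M hsel
  M_valid := hI.next_M_valid hsel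
  C_dominated := hI.next_C_dominated hsel
  H_dominated := hI.next_H_dominated

lemma of_step {s' : St V} (hI : StInvariant N s) (hst : Step N s s') : StInvariant N s' := by
  obtain ⟨a, hsel, rfl⟩ := Step.iff_exists_next.1 hst
  exact hI.next hsel

end StInvariant

lemma IsTrajectory.invariant {N : Net V} {O H M C : ℕ → Set (V × V)}
    (htraj : IsTrajectory N O H M C) {m : ℕ} (hm : 1 ≤ m) :
    StInvariant N ⟨O m, H m, M m, C m⟩ := by
  induction m, hm using Nat.le_induction with
  | base =>
    obtain ⟨h1, h2, h3, h4, -⟩ := htraj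
    rw [h1, h2, h3, h4]
    exact StInvariant.init N
  | succ m hm ih => exact ih.of_step (htraj.2.2.2.2 m hm)

lemma greedyList_subset_of_dominated (N : Net V) {T : Set (V × V)} (hT : KValid N T)
    {ls : List (V × V)} (hsort : ls.Pairwise (fun a b => N.lam b < N.lam a))
    (hdom : ∀ l ∈ ls, l ∉ T → ∃ j ∈ T, N.lam l < N.lam j ∧ linkDist N.G l j < N.K)
    {W : Set (V × V)} (hWT : W ⊆ T) (hcov : ∀ j ∈ T, j ∈ W ∨ j ∈ ls) :
    greedyList N ls W ⊆ T := by
  induction ls generalizing W with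
  | nil => exact hWT
  | cons l ls ih =>
    rw [List.pairwise_cons] at hsort
    have hdom' : ∀ l' ∈ ls, l' ∉ T → _ := fun l' h => hdom l' (List.mem_cons_of_mem _ h)
    rw [greedyList]
    by_cases hlT : l ∈ T
    · rw [if_pos (hT.mono (Set.insert_subset hlT hWT))]
      refine ih hsort.2 hdom' (Set.insert_subset hlT hWT) fun j hj => ?_
      rcases hcov j hj with h | h
      · exact Or.inl (Set.mem_insert_of_mem _ h)
      rcases List.mem_cons.1 h with rfl | h
      · exact Or.inl (Set.mem_insert _ _)
      · exact Or.inr h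
    · obtain ⟨j, hjT, hlt, hd⟩ := hdom l List.mem_cons_self hlT
      have hjW : j ∈ W := by
        rcases hcov j hjT with h | h
        · exact h
        rcases List.mem_cons.1 h with rfl | h
        · exact absurd hlt (lt_irrefl _)
        · exact absurd (hsort.1 j h) hlt.not_gt
      have hinvalid : ¬ KValid N (insert l W) := fun hv =>
        (hv l (Set.mem_insert _ _) j (Set.mem_insert_of_mem _ hjW) (ne_of_apply_ne N.lam hlt.ne)).not_gt hd
      rw [if_neg hinvalid]
      refine ih hsort.2 hdom' hWT fun j hj => (hcov j hj).imp_right fun h => ?_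
      rcases List.mem_cons.1 h with rfl | h
      exacts [absurd hj hlT, h]

end

theorem stmt12_centralized_subset_marked_general {V : Type*} (N : Net V)
    (O H M C : ℕ → Set (V × V)) (htraj : IsTrajectory N O H M C)
    (lst : List (V × V)) (hmem : ∀ l, l ∈ lst ↔ l ∈ N.L)
    (hsort : lst.Pairwise (fun a b => N.lam b < N.lam a))
    (t : ℕ) (hterm : O (t + 1) ∪ H (t + 1) = ∅) :
    greedyList N lst ∅ ⊆ M (t + 1) := by
  have hI : StInvariant N ⟨O (t + 1), H (t + 1), M (t + 1), C (t + 1)⟩ :=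
    htraj.invariant (Nat.le_add_left 1 t)
  obtain ⟨hO, hH⟩ := Set.union_empty_iff.1 hterm
  have hdom : ∀ l ∈ lst, l ∉ M (t + 1) →
      ∃ j ∈ M (t + 1), N.lam l < N.lam j ∧ linkDist N.G l j < N.K := by
    intro l hl hlM
    refine hI.C_dominated l ?_
    rcases hI.subset_union ((hmem l).1 hl) with ((h | h) | h) | h
    · exact (Set.eq_empty_iff_forall_notMem.1 hO l h).elim
    · exact (Set.eq_empty_iff_forall_notMem.1 hH l h).elim
    · exact absurd h hlM
    · exact h
  exact greedyList_subset_of_dominated N hI.M_valid hsort hdom (Set.empty_subset _)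
    fun j hj => Or.inr ((hmem j).2 (hI.M_subset hj))

/-- if the distributed greedy algorithm terminates after round `t`, then
every link chosen by the centralized greedy algorithm is MARKED by then:
`L_C ⊆ M (t+1)`. -/
theorem stmt12_centralized_subset_marked {V : Type*} [Fintype V] (N : Net V)
    (O H M C : ℕ → Set (V × V)) (htraj : IsTrajectory N O H M C)
    (lst : List (V × V)) (hmem : ∀ l, l ∈ lst ↔ l ∈ N.L)
    (hsort : lst.Pairwise (fun a b => N.lam b < N.lam a))
    (t : ℕ) (ht : 1 ≤ t) (hterm : O (t + 1) ∪ H (t + 1) = ∅) :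
    greedyList N lst ∅ ⊆ M (t + 1) :=
  stmt12_centralized_subset_marked_general N O H M C htraj lst hmem hsort t hterm
end
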